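/- Let E be a directed graph and (F, M) a Drinen–Tomforde desingularisation of E. Then the map φ : E⁰F*E⁰ → E*, defined on paths β = b¹…bⁿ (each bᵏ ∈ (F¹ ∩ E¹) ∪ F*(M)) by φ(β) = φ′(b¹)…φ′(bⁿ), where φ′ is the identity on F¹ ∩ E¹ and sends ν ∈ F*(M) to e_ν, is a bijection preserving range and source. -/

import Mathlib

structure DirectedGraph where
  V : Type
  E : Type
  r : E → V
  s : E → V

namespace DirectedGraph

variable {G : DirectedGraph}

/-- A finite path: a list of edges `μ₁ … μₙ` with `s μᵢ = r μᵢ₊₁`, together with its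
range vertex (which is the range of the first edge when the path is nonempty, and is
the defining datum of the path when the path has length zero, i.e. is a vertex). -/
structure FinPath (G : DirectedGraph) where
  vtx : G.V
  edges : List G.E
  chain : edges.Chain' fun e f => G.s e = G.r f
  hv : ∀ e ∈ edges.head?, G.r e = vtx

/-- An infinite path `μ₁μ₂…` with `s μᵢ = r μᵢ₊₁`. -/
structure InfPath (G : DirectedGraph) where
  edge : ℕ → G.E
  chain : ∀ n, G.s (edge n) = G.r (edge (n + 1))

/-- The path space `E* ∪ E^∞`. -/
abbrev PathSpace (G : DirectedGraph) := FinPath G ⊕ InfPath G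

namespace FinPath

def length (μ : FinPath G) : ℕ := μ.edges.length

def range (μ : FinPath G) : G.V := μ.vtx

def source (μ : FinPath G) : G.V := (μ.edges.getLast?).elim μ.vtx G.s

/-- A vertex, regarded as a path of length zero. -/
def ofVertex (G : DirectedGraph) (v : G.V) : FinPath G :=
  ⟨v, [], List.IsChain.nil, by simp⟩

/-- `μ.Extends ν` means `μ = νν′` for some path `ν′`. -/
def Extends (μ ν : FinPath G) : Prop := μ.vtx = ν.vtx ∧ ν.edges <+: μ.edges

end FinPath

def InfPath.range (x : InfPath G) : G.V := G.r (x.edge 0)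

/-- `x.Extends ν` means the infinite path `x` is of the form `νx′`. -/
def InfPath.Extends (x : InfPath G) (ν : FinPath G) : Prop :=
  (ν.edges = [] → x.range = ν.vtx) ∧
  ∀ i, (h : i < ν.edges.length) → x.edge i = ν.edges.get ⟨i, h⟩

/-- The cylinder set `Z(μ) = {w ∈ E* ∪ E^∞ : w = μw′}`. -/
def Cyl (μ : FinPath G) : Set (PathSpace G) :=
  {w | match w with
       | Sum.inl lam => lam.Extends μ
       | Sum.inr x => x.Extends μ}

/-- The cylinder set `Z(μe)` of the path `μ` followed by the edge `e`. -/
def CylSnoc (μ : FinPath G) (e : G.E) : Set (PathSpace G) :=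
  {w | match w with
       | Sum.inl lam => (μ.edges ++ [e]) <+: lam.edges
       | Sum.inr x => ∀ i, (h : i < (μ.edges ++ [e]).length) →
           x.edge i = (μ.edges ++ [e]).get ⟨i, h⟩}

/-- `Z(μ∖G) := Z(μ) ∖ ⋃_{e ∈ G} Z(μe)`. -/
def CylMinus (μ : FinPath G) (GS : Finset G.E) : Set (PathSpace G) :=
  Cyl μ \ ⋃ e ∈ GS, CylSnoc μ e

/-- The basic sets `Z(μ∖G)` for `μ ∈ E*` and `G ⊆ s(μ)E¹` finite. -/
def basicSets (G : DirectedGraph) : Set (Set (PathSpace G)) :=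
  {S | ∃ (μ : FinPath G) (GS : Finset G.E),
        (∀ e ∈ GS, G.r e = μ.source) ∧ S = CylMinus μ GS}

end DirectedGraph
namespace DirectedGraph

variable {G : DirectedGraph}

/-- (C1) an infinite path has no exits: any edge sharing a source with an edge of the
path is that edge. -/
def HasNoExits (mu : InfPath G) : Prop :=
  ∀ (e : G.E) (i : ℕ), G.s e = G.s (mu.edge i) → e = mu.edge i

/-- The entries of an infinite path: edges into a vertex of the path other than the
edges of the path itself. -/
def entries (mu : InfPath G) : Set G.E :=
  {e | ∃ i, G.r e = G.r (mu.edge i) ∧ e ≠ mu.edge i}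

/-- A collapsible infinite path: (C1) no exits, (C2) each vertex on it receives finitely
many edges, (C3) its range receives only its first edge, (C4) its edges are distinct,
(C5) it has zero or infinitely many entries. -/
def Collapsible (mu : InfPath G) : Prop :=
  HasNoExits mu ∧
  (∀ i, (G.r ⁻¹' {G.r (mu.edge i)}).Finite) ∧
  (G.r ⁻¹' {mu.range} = {mu.edge 0}) ∧
  Function.Injective mu.edge ∧
  (entries mu = ∅ ∨ (entries mu).Infinite)

/-- F*(mu): finite paths nu with |nu| > 1 of the form mu₁…mu_{|nu|-1}e with
e ≠ mu_{|nu|}. -/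
def CollCand (mu : InfPath G) : Set (FinPath G) :=
  {nu | 1 < nu.edges.length ∧
        (∀ i, i + 1 < nu.edges.length → nu.edges[i]? = some (mu.edge i)) ∧
        nu.edges[nu.edges.length - 1]? ≠ some (mu.edge (nu.edges.length - 1))}

/-- s_∞(M): the sources of the edges of the paths in M. -/
def sInfSet (M : Set (InfPath G)) : Set G.V :=
  {v | ∃ mu ∈ M, ∃ i, v = G.s (mu.edge i)}

/-- The edges of the graph kept (unchanged) when collapsing the paths in M:
F¹ ∖ (r⁻¹(s_∞(M)) ∪ {first edges of paths in M}). -/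
def Kept (M : Set (InfPath G)) : Set G.E :=
  {e | G.r e ∉ sInfSet M ∧ ∀ mu ∈ M, e ≠ mu.edge 0}

/-- The paths in M are pairwise disjoint: distinct paths share no edges and no
vertices. -/
def DisjointPaths (M : Set (InfPath G)) : Prop :=
  ∀ mu ∈ M, ∀ nu ∈ M, mu ≠ nu →
    (∀ i j, mu.edge i ≠ nu.edge j) ∧ (∀ i j, G.r (mu.edge i) ≠ G.r (nu.edge j))

/-- The graph obtained by collapsing the paths in M: vertices are those not of the form
s(muᵢ); edges are the kept edges together with an edge e_nu for each nu ∈ F*(mu),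
mu ∈ M.  (The subtype conditions on sources and ranges hold automatically when the
paths of M are disjoint and collapsible.) -/
def Collapsed (G : DirectedGraph) (M : Set (InfPath G)) : DirectedGraph where
  V := {v : G.V // v ∉ sInfSet M}
  E := {e : G.E // e ∈ Kept M ∧ G.s e ∉ sInfSet M} ⊕
       {p : InfPath G × FinPath G // p.1 ∈ M ∧ p.2 ∈ CollCand p.1 ∧
          p.2.vtx ∉ sInfSet M ∧ p.2.source ∉ sInfSet M}
  r := fun x => match x with
    | Sum.inl e => ⟨G.r e.1, e.2.1.1⟩
    | Sum.inr p => ⟨p.1.2.vtx, p.2.2.2.1⟩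
  s := fun x => match x with
    | Sum.inl e => ⟨G.s e.1, e.2.2⟩
    | Sum.inr p => ⟨p.1.2.source, p.2.2.2.2⟩

/-- The vertex of the collapsed graph, as a vertex of the original graph. -/
def collV (M : Set (InfPath G)) (v : (Collapsed G M).V) : G.V := v.1

/-- The list of edges of the original graph underlying an edge of the collapsed
graph. -/
def segEdges (M : Set (InfPath G)) : (Collapsed G M).E → List G.E
  | Sum.inl e => [e.1]
  | Sum.inr p => p.1.2.edges

/-- A finite list of edges is an initial segment of an infinite path. -/
def IsPrefixOfInf (l : List G.E) (x : InfPath G) : Prop :=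
  ∀ i, (h : i < l.length) → x.edge i = l.get ⟨i, h⟩

end DirectedGraph

/-!
The inverse of `φ` is the expansion map sending a path of the collapsed graph to the
concatenation of the edge lists underlying its edges.

It is injective because these edge lists form a prefix code: a kept edge is never the first
edge of a path of `M`, distinct paths of `M` share no edges, and if one path of `F*(μ)` is a
prefix of another they coincide, since the longer one still follows `μ` at the position where
the shorter one leaves it.

It is surjective because a path between vertices off `s_∞(M)` splits off its first segment:
either its first edge is kept, or it starts along some `μ ∈ M`; it must then leave `μ`, since
its source is off `μ`, and the first edge leaving `μ` is an entry of `μ`, whose source lies on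
no path of `M` by (C1), (C3), (C4) and disjointness.
-/

namespace DirectedGraph

variable {G : DirectedGraph} {M : Set (InfPath G)}

namespace FinPath

theorem ext {μ ν : FinPath G} (hv : μ.vtx = ν.vtx) (he : μ.edges = ν.edges) : μ = ν := by
  cases μ; cases ν; cases hv; cases he; rfl

theorem eq_of_edges_eq {μ ν : FinPath G} (he : μ.edges = ν.edges) (hne : μ.edges ≠ []) :
    μ = ν := by
  refine ext ?_ he
  have hhead := List.head_mem_head? hne
  rw [← μ.hv _ hhead, ← ν.hv _ (by rwa [← he])]

theorem source_of_getLast?_eq_some {μ : FinPath G} {e : G.E}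
    (h : μ.edges.getLast? = some e) : μ.source = G.s e := by
  simp [source, h]

theorem source_of_edges_eq_nil {μ : FinPath G} (h : μ.edges = []) : μ.source = μ.vtx := by
  simp [source, h]

end FinPath

theorem InfPath.r_edge_succ (mu : InfPath G) (i : ℕ) :
    G.r (mu.edge (i + 1)) = G.s (mu.edge i) :=
  (mu.chain i).symm

theorem Collapsible.r_edge_injective {mu : InfPath G} (hc : Collapsible mu) :
    Function.Injective fun i => G.r (mu.edge i) := by
  obtain ⟨hexit, -, hrange, hinj, -⟩ := hc
  have hfirst : ∀ j, G.r (mu.edge (j + 1)) ≠ G.r (mu.edge 0) := fun j h =>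
    j.succ_ne_zero (hinj (hrange.subset h))
  intro i j h
  dsimp only at h
  match i, j with
  | 0, 0 => rfl
  | 0, j + 1 => exact absurd h.symm (hfirst j)
  | i + 1, 0 => exact absurd h (hfirst i)
  | i + 1, j + 1 =>
    rw [mu.r_edge_succ, mu.r_edge_succ] at h
    rw [hinj (hexit _ j h)]

theorem s_edge_mem_sInfSet {mu : InfPath G} (hmu : mu ∈ M) (i : ℕ) :
    G.s (mu.edge i) ∈ sInfSet M :=
  ⟨mu, hmu, i, rfl⟩

theorem ne_edge_of_mem_kept {e : G.E} (he : e ∈ Kept M) {mu : InfPath G} (hmu : mu ∈ M) :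
    ∀ i, e ≠ mu.edge i
  | 0 => he.2 mu hmu
  | i + 1 => fun h => he.1 (h ▸ mu.r_edge_succ i ▸ s_edge_mem_sInfSet hmu i)

theorem exists_eq_edge_of_s_mem_sInfSet (hM : ∀ mu ∈ M, Collapsible mu) {e : G.E}
    (he : G.s e ∈ sInfSet M) : ∃ mu ∈ M, ∃ i, e = mu.edge i := by
  obtain ⟨mu, hmu, i, hi⟩ := he
  exact ⟨mu, hmu, i, (hM mu hmu).1 e i hi⟩

theorem s_notMem_sInfSet_of_mem_kept (hM : ∀ mu ∈ M, Collapsible mu) {e : G.E}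
    (he : e ∈ Kept M) : G.s e ∉ sInfSet M := fun hs =>
  let ⟨_, hmu, i, hi⟩ := exists_eq_edge_of_s_mem_sInfSet hM hs
  ne_edge_of_mem_kept he hmu i hi

theorem DisjointPaths.eq_of_edge_eq (hdisj : DisjointPaths M) {mu nu : InfPath G}
    (hmu : mu ∈ M) (hnu : nu ∈ M) {i j : ℕ} (h : mu.edge i = nu.edge j) : mu = nu :=
  by_contra fun hne => (hdisj mu hmu nu hnu hne).1 i j h

theorem DisjointPaths.eq_of_r_edge_eq (hdisj : DisjointPaths M) {mu nu : InfPath G}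
    (hmu : mu ∈ M) (hnu : nu ∈ M) {i j : ℕ} (h : G.r (mu.edge i) = G.r (nu.edge j)) :
    mu = nu :=
  by_contra fun hne => (hdisj mu hmu nu hnu hne).2 i j h

theorem s_notMem_sInfSet_of_mem_entries (hM : ∀ mu ∈ M, Collapsible mu)
    (hdisj : DisjointPaths M) {mu : InfPath G} (hmu : mu ∈ M) {e : G.E}
    (he : e ∈ entries mu) : G.s e ∉ sInfSet M := by
  obtain ⟨i, hr, hne⟩ := he
  intro hs
  obtain ⟨nu, hnu, j, rfl⟩ := exists_eq_edge_of_s_mem_sInfSet hM hs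
  obtain rfl := hdisj.eq_of_r_edge_eq hnu hmu hr
  exact hne (congrArg nu.edge ((hM nu hnu).r_edge_injective hr))

theorem head?_edges_of_mem_collCand {mu : InfPath G} {nu : FinPath G}
    (h : nu ∈ CollCand mu) : nu.edges.head? = some (mu.edge 0) := by
  rw [List.head?_eq_getElem?]
  exact h.2.1 0 (by have := h.1; omega)

theorem edges_ne_nil_of_mem_collCand {mu : InfPath G} {nu : FinPath G}
    (h : nu ∈ CollCand mu) : nu.edges ≠ [] :=
  List.ne_nil_of_mem (List.mem_of_mem_head? (head?_edges_of_mem_collCand h))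

theorem edges_eq_of_prefix_of_mem_collCand {mu : InfPath G} {nu₁ nu₂ : FinPath G}
    (h₁ : nu₁ ∈ CollCand mu) (h₂ : nu₂ ∈ CollCand mu) (h : nu₁.edges <+: nu₂.edges) :
    nu₁.edges = nu₂.edges := by
  refine h.eq_of_length_le (not_lt.1 fun hlt => h₁.2.2 ?_)
  obtain ⟨t, ht⟩ := h
  have hlen₁ := h₁.1
  have hagree := h₂.2.1 (nu₁.edges.length - 1) (by omega)
  rwa [← ht, List.getElem?_append_left (by omega)] at hagree

theorem segEdges_ne_nil : ∀ g : (Collapsed G M).E, segEdges M g ≠ []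
  | .inl _ => List.cons_ne_nil _ _
  | .inr p => edges_ne_nil_of_mem_collCand p.2.2.1

theorem isChain_segEdges : ∀ g : (Collapsed G M).E,
    (segEdges M g).IsChain fun e f => G.s e = G.r f
  | .inl _ => List.isChain_singleton _
  | .inr p => p.1.2.chain

theorem r_of_mem_head?_segEdges : ∀ (g : (Collapsed G M).E),
    ∀ e ∈ (segEdges M g).head?, G.r e = ((Collapsed G M).r g).1
  | .inl _, _, rfl => rfl
  | .inr p, e, he => p.1.2.hv e he

theorem s_of_mem_getLast?_segEdges : ∀ (g : (Collapsed G M).E),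
    ∀ e ∈ (segEdges M g).getLast?, G.s e = ((Collapsed G M).s g).1
  | .inl _, _, rfl => rfl
  | .inr _, _, he => (FinPath.source_of_getLast?_eq_some he).symm

theorem eq_of_segEdges_prefix (hdisj : DisjointPaths M) {g₁ g₂ : (Collapsed G M).E}
    (h : segEdges M g₁ <+: segEdges M g₂) : g₁ = g₂ := by
  have hhead : (segEdges M g₁).head? = (segEdges M g₂).head? := by
    obtain ⟨t, ht⟩ := h
    rw [← ht, List.head?_append_of_ne_nil _ (segEdges_ne_nil g₁)]
  rcases g₁ with e₁ | ⟨⟨mu₁, nu₁⟩, hmu₁, hnu₁, _⟩ <;>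
    rcases g₂ with e₂ | ⟨⟨mu₂, nu₂⟩, hmu₂, hnu₂, _⟩ <;>
    simp only [segEdges] at h hhead
  · exact congrArg Sum.inl (Subtype.ext (Option.some_injective _ hhead))
  · rw [head?_edges_of_mem_collCand hnu₂] at hhead
    exact absurd (Option.some_injective _ hhead) (ne_edge_of_mem_kept e₁.2.1 hmu₂ 0)
  · rw [head?_edges_of_mem_collCand hnu₁] at hhead
    exact absurd (Option.some_injective _ hhead).symm (ne_edge_of_mem_kept e₂.2.1 hmu₁ 0)
  · rw [head?_edges_of_mem_collCand hnu₁, head?_edges_of_mem_collCand hnu₂] at hhead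
    obtain rfl := hdisj.eq_of_edge_eq hmu₁ hmu₂ (Option.some_injective _ hhead)
    have hedges := edges_eq_of_prefix_of_mem_collCand hnu₁ hnu₂ h
    obtain rfl := FinPath.eq_of_edges_eq hedges (edges_ne_nil_of_mem_collCand hnu₁)
    rfl

theorem flatMap_segEdges_injective (hdisj : DisjointPaths M) :
    Function.Injective fun l : List (Collapsed G M).E => l.flatMap (segEdges M) := by
  intro l₁
  induction l₁ with
  | nil =>
    rintro (_ | ⟨g, l⟩) h
    · rfl
    · simp [segEdges_ne_nil] at h
  | cons g₁ l₁ ih =>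
    rintro (_ | ⟨g₂, l₂⟩) h
    · simp [segEdges_ne_nil] at h
    · simp only [List.flatMap_cons] at h
      obtain rfl : g₁ = g₂ :=
        (List.prefix_or_prefix_of_prefix ⟨_, h⟩ ⟨_, rfl⟩).elim (eq_of_segEdges_prefix hdisj)
          fun h' => (eq_of_segEdges_prefix hdisj h').symm
      rw [ih (List.append_cancel_left h)]

theorem isChain_flatMap_segEdges {l : List (Collapsed G M).E}
    (h : l.IsChain fun g g' => (Collapsed G M).s g = (Collapsed G M).r g') :
    (l.flatMap (segEdges M)).IsChain fun e f => G.s e = G.r f := by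
  rw [List.flatMap_def, List.isChain_flatten (by simp [segEdges_ne_nil]), List.isChain_map]
  refine ⟨by simpa using fun g _ => isChain_segEdges g, h.imp fun g g' hgg' x hx y hy => ?_⟩
  rw [s_of_mem_getLast?_segEdges g x hx, r_of_mem_head?_segEdges g' y hy, hgg']

theorem exists_first_deviation {mu : InfPath G} (hmu : mu ∈ M) {l : List G.E} (hl : l ≠ [])
    (hs : ∀ e ∈ l.getLast?, G.s e ∉ sInfSet M) :
    ∃ k, ∃ hk : k < l.length, l[k] ≠ mu.edge k ∧ ∀ j < k, l[j]? = some (mu.edge j) := by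
  classical
  have hex : ∃ k, ∃ hk : k < l.length, l[k] ≠ mu.edge k := by
    by_contra! hall
    have hlen : l.length - 1 < l.length := by have := List.length_pos_iff.2 hl; omega
    refine hs _ ?_ (s_edge_mem_sInfSet hmu (l.length - 1))
    rw [List.getLast?_eq_getElem?, List.getElem?_eq_getElem hlen, hall _ hlen]
    rfl
  obtain ⟨hk, hdev⟩ := Nat.find_spec hex
  refine ⟨Nat.find hex, hk, hdev, fun j hj => ?_⟩
  have hagree := Nat.find_min hex hj
  simp only [not_exists, not_not] at hagree
  rw [List.getElem?_eq_getElem (hj.trans hk), hagree (hj.trans hk)]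

theorem mem_collCand_of_edges_eq_take {mu : InfPath G} {l : List G.E} {k : ℕ}
    (hk0 : 0 < k) (hk : k < l.length) (hdev : l[k] ≠ mu.edge k)
    (hagree : ∀ j < k, l[j]? = some (mu.edge j)) {nu : FinPath G}
    (hnu : nu.edges = l.take (k + 1)) : nu ∈ CollCand mu := by
  have hlen : nu.edges.length = k + 1 := by simp [hnu]; omega
  refine ⟨by omega, fun i hi => ?_, ?_⟩
  · rw [hnu, List.getElem?_take_of_lt (by omega)]
    exact hagree i (by omega)
  · rw [hlen, Nat.add_sub_cancel, hnu, List.getElem?_take_of_lt (by omega),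
      List.getElem?_eq_getElem hk]
    exact fun h => hdev (Option.some_injective _ h)

theorem mem_entries_of_deviation {mu : InfPath G} {l : List G.E}
    (hc : l.IsChain fun e f => G.s e = G.r f) {k : ℕ} (hk : k + 1 < l.length)
    (hdev : l[k + 1] ≠ mu.edge (k + 1)) (hprev : l[k]? = some (mu.edge k)) :
    l[k + 1] ∈ entries mu := by
  refine ⟨k + 1, ?_, hdev⟩
  rw [List.getElem?_eq_getElem (by omega)] at hprev
  rw [← List.isChain_iff_getElem.1 hc k hk, Option.some_injective _ hprev, mu.r_edge_succ]

theorem exists_segEdges_prefix (hM : ∀ mu ∈ M, Collapsible mu) (hdisj : DisjointPaths M)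
    {l : List G.E} {v : G.V} (hc : l.IsChain fun e f => G.s e = G.r f) (hl : l ≠ [])
    (hhead : ∀ e ∈ l.head?, G.r e = v) (hv : v ∉ sInfSet M)
    (hs : ∀ e ∈ l.getLast?, G.s e ∉ sInfSet M) :
    ∃ g : (Collapsed G M).E, segEdges M g <+: l ∧ ((Collapsed G M).r g).1 = v := by
  obtain ⟨e, t, rfl⟩ := List.exists_cons_of_ne_nil hl
  have hre : G.r e = v := hhead e rfl
  by_cases hkept : e ∈ Kept M
  · exact ⟨.inl ⟨e, hkept, s_notMem_sInfSet_of_mem_kept hM hkept⟩, ⟨t, rfl⟩, hre⟩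
  obtain ⟨mu, hmu, he⟩ : ∃ mu ∈ M, e = mu.edge 0 := by
    by_contra! hne
    exact hkept ⟨hre ▸ hv, hne⟩
  obtain ⟨k, hk, hdev, hagree⟩ := exists_first_deviation hmu hl hs
  obtain ⟨k, rfl⟩ : ∃ k', k = k' + 1 :=
    Nat.exists_eq_succ_of_ne_zero fun h0 => by subst h0; exact hdev he
  let nu : FinPath G :=
    ⟨v, (e :: t).take (k + 1 + 1), hc.take _, fun f hf => hhead f (by simpa using hf)⟩
  have hnu : nu ∈ CollCand mu := mem_collCand_of_edges_eq_take k.succ_pos hk hdev hagree rfl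
  have hsource : nu.source = G.s (e :: t)[k + 1] := FinPath.source_of_getLast?_eq_some (by
    rw [List.getLast?_take, if_neg (by omega), Nat.add_sub_cancel, List.getElem?_eq_getElem hk]
    rfl)
  have hentry := mem_entries_of_deviation hc hk hdev (hagree k k.lt_succ_self)
  have hsource_notMem := hsource ▸ s_notMem_sInfSet_of_mem_entries hM hdisj hmu hentry
  exact ⟨.inr ⟨(mu, nu), hmu, hnu, hv, hsource_notMem⟩, List.take_prefix _ _, rfl⟩

theorem exists_flatMap_segEdges_eq (hM : ∀ mu ∈ M, Collapsible mu) (hdisj : DisjointPaths M)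
    {l : List G.E} {v : G.V} (hc : l.IsChain fun e f => G.s e = G.r f)
    (hhead : ∀ e ∈ l.head?, G.r e = v) (hv : v ∉ sInfSet M)
    (hs : ∀ e ∈ l.getLast?, G.s e ∉ sInfSet M) :
    ∃ gl : List (Collapsed G M).E, gl.flatMap (segEdges M) = l ∧
      gl.IsChain (fun g g' => (Collapsed G M).s g = (Collapsed G M).r g') ∧
      ∀ g ∈ gl.head?, ((Collapsed G M).r g).1 = v := by
  induction hn : l.length using Nat.strong_induction_on generalizing l v with
  | _ n ih =>
  rcases eq_or_ne l [] with rfl | hl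
  · exact ⟨[], rfl, List.isChain_nil, by simp⟩
  obtain ⟨g, ⟨t, rfl⟩, hg⟩ := exists_segEdges_prefix hM hdisj hc hl hhead hv hs
  have hseg := segEdges_ne_nil g
  have hlast := List.getLast?_eq_some_getLast hseg
  have hthead : ∀ e ∈ t.head?, G.r e = ((Collapsed G M).s g).1 := fun e he =>
    s_of_mem_getLast?_segEdges g _ hlast ▸ ((List.isChain_append.1 hc).2.2 _ hlast e he).symm
  have htlast : ∀ e ∈ t.getLast?, G.s e ∉ sInfSet M := fun e he =>
    hs e (by rw [List.getLast?_append, Option.mem_def.1 he]; rfl)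
  obtain ⟨gl, hgl, hchain, hglhead⟩ := ih t.length
    (by simp [← hn, List.length_pos_iff.2 hseg]) hc.right_of_append hthead
    ((Collapsed G M).s g).2 htlast rfl
  refine ⟨g :: gl, by rw [List.flatMap_cons, hgl], ?_, fun g' hg' => by cases hg'; exact hg⟩
  exact List.isChain_cons.2 ⟨fun g' hg' => Subtype.ext (hglhead g' hg').symm, hchain⟩

def expandPath (gam : FinPath (Collapsed G M)) : FinPath G where
  vtx := gam.vtx.1
  edges := gam.edges.flatMap (segEdges M)
  chain := isChain_flatMap_segEdges gam.chain
  hv e he := by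
    cases hl : gam.edges with
    | nil => simp [hl] at he
    | cons g l =>
      rw [hl, List.flatMap_cons, List.head?_append_of_ne_nil _ (segEdges_ne_nil g)] at he
      rw [r_of_mem_head?_segEdges g e he, gam.hv g (by simp [hl])]

theorem expandPath_source (gam : FinPath (Collapsed G M)) :
    (expandPath gam).source = gam.source.1 := by
  rcases List.eq_nil_or_concat gam.edges with h | ⟨l, g, h⟩
  · rw [FinPath.source_of_edges_eq_nil h,
      FinPath.source_of_edges_eq_nil (by simp [expandPath, h])]
    rfl
  · have hseg := segEdges_ne_nil g
    have hlast := List.getLast?_eq_some_getLast hseg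
    have hexpand : (expandPath gam).edges.getLast? = (segEdges M g).getLast? := by
      simp only [expandPath, h, List.concat_eq_append, List.flatMap_append,
        List.flatMap_singleton, List.getLast?_append_of_ne_nil _ hseg]
    rw [FinPath.source_of_getLast?_eq_some (e := g) (by simp [h]),
      FinPath.source_of_getLast?_eq_some (hexpand.trans hlast)]
    exact s_of_mem_getLast?_segEdges g _ hlast

theorem expandPath_injective (hdisj : DisjointPaths M) :
    Function.Injective (expandPath (M := M)) := fun _ _ h =>
  FinPath.ext (Subtype.ext (congrArg FinPath.vtx h))
    (flatMap_segEdges_injective hdisj (congrArg FinPath.edges h))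

theorem exists_expandPath_eq (hM : ∀ mu ∈ M, Collapsible mu) (hdisj : DisjointPaths M)
    {beta : FinPath G} (hr : beta.range ∉ sInfSet M) (hs : beta.source ∉ sInfSet M) :
    ∃ gam : FinPath (Collapsed G M), expandPath gam = beta := by
  obtain ⟨gl, hgl, hchain, hhead⟩ := exists_flatMap_segEdges_eq hM hdisj beta.chain beta.hv
    hr fun e he => FinPath.source_of_getLast?_eq_some he ▸ hs
  exact ⟨⟨⟨beta.vtx, hr⟩, gl, hchain, fun g hg => Subtype.ext (hhead g hg)⟩,
    FinPath.ext rfl hgl⟩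

end DirectedGraph

open DirectedGraph in
theorem phi_bijective_general (F : DirectedGraph) (M : Set (InfPath F))
    (hM : ∀ mu ∈ M, Collapsible mu) (hdisj : DisjointPaths M) :
    ∃ phi : {beta : FinPath F //
        beta.range ∉ sInfSet M ∧ beta.source ∉ sInfSet M} → FinPath (Collapsed F M),
      (∀ (beta : {beta : FinPath F //
            beta.range ∉ sInfSet M ∧ beta.source ∉ sInfSet M})
          (gam : FinPath (Collapsed F M)),
          beta.1.edges = gam.edges.flatMap (segEdges M) →
          beta.1.vtx = collV M gam.vtx → phi beta = gam) ∧
      Function.Bijective phi ∧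
      (∀ beta, collV M (phi beta).range = beta.1.range ∧
        collV M (phi beta).source = beta.1.source) := by
  let expand (gam : FinPath (Collapsed F M)) :
      {beta : FinPath F // beta.range ∉ sInfSet M ∧ beta.source ∉ sInfSet M} :=
    ⟨expandPath gam, gam.vtx.2, (expandPath_source gam).symm ▸ gam.source.2⟩
  have hbij : Function.Bijective expand := by
    refine ⟨fun _ _ h => expandPath_injective hdisj (congrArg Subtype.val h), ?_⟩
    rintro ⟨beta, hr, hs⟩
    obtain ⟨gam, rfl⟩ := exists_expandPath_eq hM hdisj hr hs
    exact ⟨gam, rfl⟩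
  let e := Equiv.ofBijective expand hbij
  refine ⟨e.symm, fun beta gam hedges hvtx => e.symm_apply_eq.2 ?_, e.symm.bijective,
    fun beta => ?_⟩
  · exact Subtype.ext (FinPath.ext hvtx hedges)
  · obtain ⟨gam, rfl⟩ := hbij.2 beta
    rw [Equiv.ofBijective_symm_apply_apply]
    exact ⟨rfl, (expandPath_source gam).symm⟩

open DirectedGraph in
/-- for a Drinen-Tomforde desingularisation (F, M) of E = F_M, the map
phi : E⁰F*E⁰ → E* determined by concatenating the segment images is a bijection
preserving range and source. -/
theorem phi_bijective (F : DirectedGraph) (M : Set (InfPath F))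
    (hrf : ∀ v : F.V, (F.r ⁻¹' {v}).Finite)
    (hns : ∀ v : F.V, (F.r ⁻¹' {v}).Nonempty)
    (hM : ∀ mu ∈ M, Collapsible mu) (hdisj : DisjointPaths M) :
    ∃ phi : {beta : FinPath F //
        beta.range ∉ sInfSet M ∧ beta.source ∉ sInfSet M} → FinPath (Collapsed F M),
      (∀ (beta : {beta : FinPath F //
            beta.range ∉ sInfSet M ∧ beta.source ∉ sInfSet M})
          (gam : FinPath (Collapsed F M)),
          beta.1.edges = gam.edges.flatMap (segEdges M) →
          beta.1.vtx = collV M gam.vtx → phi beta = gam) ∧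
      Function.Bijective phi ∧
      (∀ beta, collV M (phi beta).range = beta.1.range ∧
        collV M (phi beta).source = beta.1.source) :=
  phi_bijective_general F M hM hdisj
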